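/- Let p > 3 be a prime with p ≡ 3 (mod 4), and let X be the smooth projective curve y² = x^p − x over GF(p²). Then |X(GF(p²))| = 2p² − p + 1, and the set X(GF(p²)) \ X(GF(p)) has exactly 2p(p−1) elements. -/
import Mathlib

open Finset Polynomial

open scoped Classical

private noncomputable instance (p : ℕ) [Fact (Nat.Prime p)] :
    Fintype (GaloisField p 2) := Fintype.ofFinite _

section Aux

variable (p : ℕ) [Fact (Nat.Prime p)]

private lemma gf_card : Fintype.card (GaloisField p 2) = p ^ 2 := by
  rw [← Nat.card_eq_fintype_card]
  exact GaloisField.card p 2 two_ne_zero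

private lemma gf_ringChar : ringChar (GaloisField p 2) = p :=
  ringChar.eq _ p

private lemma gf_pow_card (x : GaloisField p 2) : x ^ p ^ 2 = x := by
  have := FiniteField.pow_card x
  rwa [gf_card] at this

private lemma gf_frob_sub (x : GaloisField p 2) :
    (x ^ p - x) ^ p = x - x ^ p := by
  have h := map_sub (frobenius (GaloisField p 2) p) (x ^ p) x
  simp only [frobenius_def] at h
  rw [h, ← pow_mul, ← pow_two, gf_pow_card]

/-- The fixed points of Frobenius form a set of size `p`. -/
private lemma gf_card_fixed :
    (Finset.univ.filter fun x : GaloisField p 2 => x ^ p = x).card = p := by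
  classical
  have hp : p.Prime := Fact.out
  apply le_antisymm
  · have hsub : (Finset.univ.filter fun x : GaloisField p 2 => x ^ p = x) ⊆
        ((X ^ p - X : (GaloisField p 2)[X]).roots.toFinset) := by
      intro x hx
      rw [Finset.mem_filter] at hx
      rw [Multiset.mem_toFinset, mem_roots (FiniteField.X_pow_card_sub_X_ne_zero (GaloisField p 2) hp.one_lt)]
      simp [sub_eq_zero, hx.2]
    calc (Finset.univ.filter fun x : GaloisField p 2 => x ^ p = x).card
        ≤ ((X ^ p - X : (GaloisField p 2)[X]).roots.toFinset).card := Finset.card_le_card hsub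
      _ ≤ Multiset.card (X ^ p - X : (GaloisField p 2)[X]).roots := Multiset.toFinset_card_le _
      _ ≤ (X ^ p - X : (GaloisField p 2)[X]).natDegree := Polynomial.card_roots' _
      _ = p := FiniteField.X_pow_card_sub_X_natDegree_eq (GaloisField p 2) hp.one_lt
  · have hmaps : ∀ a : ZMod p, a ∈ (Finset.univ : Finset (ZMod p)) →
        algebraMap (ZMod p) (GaloisField p 2) a ∈ (Finset.univ.filter fun x : GaloisField p 2 => x ^ p = x) := by
      intro a _
      rw [Finset.mem_filter]
      refine ⟨Finset.mem_univ _, ?_⟩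
      rw [← map_pow, ZMod.pow_card]
    have hinj := (algebraMap (ZMod p) (GaloisField p 2)).injective
    calc p = Fintype.card (ZMod p) := (ZMod.card p).symm
      _ = (Finset.univ : Finset (ZMod p)).card := (Finset.card_univ).symm
      _ ≤ (Finset.univ.filter fun x : GaloisField p 2 => x ^ p = x).card :=
          Finset.card_le_card_of_injOn _ hmaps (hinj.injOn)

/-- Fiber count over a Frobenius-fixed `x`. -/
private lemma gf_fiber_fixed {x : GaloisField p 2} (hx : x ^ p = x) :
    Nat.card {y : GaloisField p 2 // y ^ 2 = x ^ p - x} = 1 := by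
  rw [hx, sub_self]
  have h : ∀ y : GaloisField p 2, y ^ 2 = 0 ↔ y = 0 := fun y =>
    pow_eq_zero_iff two_ne_zero
  rw [Nat.card_eq_one_iff_unique]
  refine ⟨⟨?_⟩, ⟨⟨0, by simp⟩⟩⟩
  rintro ⟨y, hy⟩ ⟨z, hz⟩
  simp only [h] at hy hz
  simp [hy, hz]

/-- Every nonzero value `x^p - x` is a square when `p ≡ 3 mod 4`. -/
private lemma gf_isSquare (hp3 : 3 < p) (hp4 : p % 4 = 3)
    {x : GaloisField p 2} (hx : ¬ x ^ p = x) :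
    IsSquare (x ^ p - x) := by
  classical
  have hp : p.Prime := Fact.out
  set a : GaloisField p 2 := x ^ p - x with ha_def
  have ha : a ≠ 0 := sub_ne_zero.mpr hx
  have hchar2 : ringChar (GaloisField p 2) ≠ 2 := by rw [gf_ringChar]; omega
  have hap : a ^ p = -a := by rw [ha_def, gf_frob_sub, neg_sub]
  -- a ^ (p - 1) = -1
  have hap1 : a ^ (p - 1) * a = -a := by
    rw [← pow_succ, Nat.sub_add_cancel hp.one_lt.le, hap]
  have hpm1 : a ^ (p - 1) = -1 := by
    have := mul_right_cancel₀ ha (by rw [hap1, neg_mul, one_mul] : a ^ (p - 1) * a = -1 * a)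
    exact this
  rw [FiniteField.isSquare_iff hchar2 ha, gf_card]
  -- p = 4k + 3
  obtain ⟨k, hk⟩ : ∃ k, p = 4 * k + 3 := ⟨p / 4, by omega⟩
  have hexp : p ^ 2 / 2 = (p + 1) * ((p - 1) / 2) := by
    subst hk
    have h9 : (4 * k + 3) ^ 2 = 2 * (8 * (k * k) + 12 * k + 4) + 1 := by ring
    have hL : ∀ m, (2 * (8 * m + 12 * k + 4) + 1) / 2 = 8 * m + 12 * k + 4 := fun m => by omega
    rw [h9, hL (k * k), show (4 * k + 3 - 1) / 2 = 2 * k + 1 from by omega]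
    ring
  rw [hexp, pow_mul]
  have hap1' : a ^ (p + 1) = -(a ^ 2) := by
    rw [pow_succ, hap, pow_two, neg_mul, mul_comm]
  rw [hap1']
  have hhalf : (p - 1) / 2 = 2 * k + 1 := by omega
  rw [hhalf]
  have hodd : (-(a ^ 2)) ^ (2 * k + 1) = -((a ^ 2) ^ (2 * k + 1)) :=
    Odd.neg_pow ⟨k, by ring⟩ _
  rw [hodd, ← pow_mul, show 2 * (2 * k + 1) = p - 1 from by omega, hpm1, neg_neg]

/-- Fiber count over a non-fixed `x`. -/
private lemma gf_fiber_nonfixed (hp3 : 3 < p) (hp4 : p % 4 = 3)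
    {x : GaloisField p 2} (hx : ¬ x ^ p = x) :
    Nat.card {y : GaloisField p 2 // y ^ 2 = x ^ p - x} = 2 := by
  classical
  set a : GaloisField p 2 := x ^ p - x with ha_def
  have ha : a ≠ 0 := sub_ne_zero.mpr hx
  have hchar2 : ringChar (GaloisField p 2) ≠ 2 := by rw [gf_ringChar]; omega
  have hsq : IsSquare a := gf_isSquare p hp3 hp4 hx
  have hqc : quadraticChar (GaloisField p 2) a = 1 := (quadraticChar_one_iff_isSquare ha).mpr hsq
  have hcount := quadraticChar_card_sqrts hchar2 a
  rw [hqc] at hcount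
  have : ({y : GaloisField p 2 | y ^ 2 = a}.toFinset.card : ℤ) = 2 := by rw [hcount]; norm_num
  have h2 : {y : GaloisField p 2 | y ^ 2 = a}.toFinset.card = 2 := by exact_mod_cast this
  have h3 : Nat.card {y : GaloisField p 2 // y ^ 2 = a} =
      {y : GaloisField p 2 | y ^ 2 = a}.toFinset.card := by
    rw [Set.toFinset_card, Nat.card_eq_fintype_card]
    exact Fintype.card_congr (Equiv.subtypeEquivRight fun y => Iff.rfl)
  rw [h3, h2]

end Aux

/-- Let `p > 3` be a prime with `p ≡ 3 (mod 4)` and let `X` be the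
smooth projective curve `y² = xᵖ - x` over `F = GF(p²)` (its rational points being
the affine solutions together with the single point at infinity).  Then
`|X(F)| = 2p² - p + 1`, and exactly `2p(p-1)` of these points lie outside
`X(GF(p))` (the subfield `GF(p) ⊆ F` being `{a : a^p = a}`; the point at infinity
lies in `X(GF(p))`). -/
theorem point_count_y2_eq_xp_sub_x (p : ℕ) [Fact (Nat.Prime p)]
    (hp3 : 3 < p) (hp4 : p % 4 = 3) :
    Nat.card {q : GaloisField p 2 × GaloisField p 2 //
        q.2 ^ 2 = q.1 ^ p - q.1} + 1 = 2 * p ^ 2 - p + 1 ∧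
    Nat.card {q : GaloisField p 2 × GaloisField p 2 //
        q.2 ^ 2 = q.1 ^ p - q.1 ∧ ¬(q.1 ^ p = q.1 ∧ q.2 ^ p = q.2)} =
      2 * p * (p - 1) := by
  classical
  set F := GaloisField p 2 with hF
  have hp : p.Prime := Fact.out
  have hcard : Fintype.card F = p ^ 2 := gf_card p
  have hfixed := gf_card_fixed p
  have hunfixed : (Finset.univ.filter fun x : F => ¬ x ^ p = x).card = p ^ 2 - p := by
    have := Finset.card_filter_add_card_filter_not
      (s := (Finset.univ : Finset F)) (p := fun x : GaloisField p 2 => x ^ p = x)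
    rw [Finset.card_univ, hcard, hfixed] at this
    omega
  have hple : p ≤ p ^ 2 := Nat.le_self_pow two_ne_zero p
  constructor
  · -- first count
    have e1 : Nat.card {q : F × F // q.2 ^ 2 = q.1 ^ p - q.1} =
        ∑ x : F, Nat.card {y : F // y ^ 2 = x ^ p - x} := by
      rw [Nat.card_congr (Equiv.subtypeProdEquivSigmaSubtype fun a b : F => b ^ 2 = a ^ p - a),
        Nat.card_eq_fintype_card, Fintype.card_sigma]
      simp [Nat.card_eq_fintype_card]
    rw [e1]
    have e2 : ∀ x : F, Nat.card {y : F // y ^ 2 = x ^ p - x} =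
        if x ^ p = x then 1 else 2 := by
      intro x
      split_ifs with h
      · exact gf_fiber_fixed p h
      · exact gf_fiber_nonfixed p hp3 hp4 h
    rw [Finset.sum_congr rfl fun x _ => e2 x, Finset.sum_ite, Finset.sum_const,
      Finset.sum_const, hfixed, hunfixed]
    simp only [smul_eq_mul, pow_two]
    have hpp : p ≤ p * p := Nat.le_mul_of_pos_left p hp.pos
    omega
  · -- second count
    have e1 : Nat.card {q : F × F //
        q.2 ^ 2 = q.1 ^ p - q.1 ∧ ¬(q.1 ^ p = q.1 ∧ q.2 ^ p = q.2)} =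
        ∑ x : F, Nat.card {y : F // y ^ 2 = x ^ p - x ∧ ¬(x ^ p = x ∧ y ^ p = y)} := by
      rw [Nat.card_congr (Equiv.subtypeProdEquivSigmaSubtype
          fun a b : F => b ^ 2 = a ^ p - a ∧ ¬(a ^ p = a ∧ b ^ p = b)),
        Nat.card_eq_fintype_card, Fintype.card_sigma]
      simp [Nat.card_eq_fintype_card]
    rw [e1]
    have e2 : ∀ x : F, Nat.card {y : F // y ^ 2 = x ^ p - x ∧ ¬(x ^ p = x ∧ y ^ p = y)} =
        if x ^ p = x then 0 else 2 := by
      intro x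
      split_ifs with h
      · -- fiber is empty: y^2 = 0 forces y = 0, hence y^p = y
        rw [Nat.card_eq_zero]
        left
        constructor
        rintro ⟨y, hy1, hy2⟩
        apply hy2
        refine ⟨h, ?_⟩
        rw [h, sub_self, pow_eq_zero_iff two_ne_zero] at hy1
        rw [hy1, zero_pow hp.ne_zero]
      · have : {y : F // y ^ 2 = x ^ p - x ∧ ¬(x ^ p = x ∧ y ^ p = y)} ≃
            {y : F // y ^ 2 = x ^ p - x} :=
          Equiv.subtypeEquivRight fun y => by tauto
        rw [Nat.card_congr this]
        exact gf_fiber_nonfixed p hp3 hp4 h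
    rw [Finset.sum_congr rfl fun x _ => e2 x, Finset.sum_ite, Finset.sum_const,
      Finset.sum_const, hfixed, hunfixed]
    have hpp : p ≤ p * p := Nat.le_mul_of_pos_left p hp.pos
    have key : 2 * p * (p - 1) = 2 * (p * p) - 2 * p := by
      obtain ⟨j, rfl⟩ : ∃ j, p = j + 1 := ⟨p - 1, by omega⟩
      simp only [Nat.add_sub_cancel]
      rw [show 2 * ((j + 1) * (j + 1)) = 2 * (j + 1) * j + 2 * (j + 1) from by ring,
        Nat.add_sub_cancel]
    simp only [smul_eq_mul, pow_two]
    rw [key]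
    omega
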